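/- arXiv:2308.16655 — 4 statements merged into one kernel-verified Lean document; each statement's English description precedes it below -/
import Mathlib

section
/- If W is a totally isotropic subspace of a scalar product space (V, g) with basis (N₁, ..., N_k), then there exists a totally isotropic subspace U of V with W ∩ U = {0} and a basis (M₁, ..., M_k) of U such that g(Nᵢ, Mⱼ) = δᵢⱼ holds for all 1 ≤ i, j ≤ k. -/
/- Common definitions: scalar product space (V, g) with nondegenerate symmetric bilinear
form g, algebraic curvature tensors, Jacobi operators, and derived notions. -/

variable {V : Type*} [AddCommGroup V] [Module ℝ V]

/-- `R` is quadrilinear and satisfies the symmetries of an algebraic curvature tensor. -/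
def IsCurv (R : V → V → V → V → ℝ) : Prop :=
  (∀ (a : ℝ) (X X' Y Z W : V), R (a • X + X') Y Z W = a * R X Y Z W + R X' Y Z W) ∧
  (∀ (a : ℝ) (X Y Y' Z W : V), R X (a • Y + Y') Z W = a * R X Y Z W + R X Y' Z W) ∧
  (∀ (a : ℝ) (X Y Z Z' W : V), R X Y (a • Z + Z') W = a * R X Y Z W + R X Y Z' W) ∧
  (∀ (a : ℝ) (X Y Z W W' : V), R X Y Z (a • W + W') = a * R X Y Z W + R X Y Z W') ∧
  (∀ X Y Z W : V, R X Y Z W = - R Y X Z W) ∧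
  (∀ X Y Z W : V, R X Y Z W = - R X Y W Z) ∧
  (∀ X Y Z W : V, R X Y Z W = R Z W X Y) ∧
  (∀ X Y Z W : V, R X Y Z W + R Y Z X W + R Z X Y W = 0)

/-- `J X` is the Jacobi operator of `R`: the unique linear map with
`g (J X Y) Z = R Y X X Z` for all `Y Z`. -/
def IsJacobi (g : V →ₗ[ℝ] V →ₗ[ℝ] ℝ) (R : V → V → V → V → ℝ) (J : V → V →ₗ[ℝ] V) : Prop :=
  ∀ X Y Z : V, g (J X Y) Z = R Y X X Z

/-- Jacobi-orthogonality: `g (J_X Y) (J_Y X) = 0` for all mutually orthogonal unit `X Y`. -/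
def JacobiOrthogonal (g : V →ₗ[ℝ] V →ₗ[ℝ] ℝ) (J : V → V →ₗ[ℝ] V) : Prop :=
  ∀ X Y : V, (g X X = 1 ∨ g X X = -1) → (g Y Y = 1 ∨ g Y Y = -1) → g X Y = 0 →
    g (J X Y) (J Y X) = 0

/- The functionals `g Nᵢ` are linearly independent, so `x ↦ (g Nᵢ x)ᵢ` is onto `ℝᵏ` and yields
a family `P` with `g (Nᵢ) (Pⱼ) = δᵢⱼ`. Since `g` vanishes on `W`, correcting each `Pⱼ` by
`-½ ∑ₗ g (Pₗ) (Pⱼ) Nₗ` keeps these pairings and makes the family totally isotropic; the pairing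
with `N` then forces linear independence and `W ∩ span M = 0`. -/

section

variable {K V ι : Type*} [Field K] [AddCommGroup V] [Module K V]

def IsTotallyIsotropic (B : V →ₗ[K] V →ₗ[K] K) (W : Submodule K V) : Prop :=
  ∀ x ∈ W, B x x = 0

theorem IsTotallyIsotropic.apply_eq_zero [NeZero (2 : K)] {B : V →ₗ[K] V →ₗ[K] K}
    (hB : ∀ x y, B x y = B y x) {W : Submodule K V} (hW : IsTotallyIsotropic B W)
    {x y : V} (hx : x ∈ W) (hy : y ∈ W) : B x y = 0 := by
  have hsum := hW (x + y) (W.add_mem hx hy)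
  simp only [map_add, LinearMap.add_apply, hW x hx, hW y hy, hB y x] at hsum
  simpa [← two_mul, two_ne_zero] using hsum

theorem linearIndependent_apply_of_nondegenerate {B : V →ₗ[K] V →ₗ[K] K}
    (hB : ∀ x, (∀ y, B x y = 0) → x = 0) {N : ι → V} (hN : LinearIndependent K N) :
    LinearIndependent K (fun i ↦ ⇑(B (N i))) :=
  hN.map' (LinearMap.ltoFun K V K K ∘ₗ B) <| LinearMap.ker_eq_bot'.2 fun x hx ↦
    hB x fun y ↦ congrFun hx y

theorem LinearMap.pi_surjective_of_linearIndependent [Finite ι] {f : ι → V →ₗ[K] K}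
    (hf : LinearIndependent K (fun i ↦ ⇑(f i))) : Function.Surjective (LinearMap.pi f) := by
  rw [← LinearMap.range_eq_top, ← span_flip_eq_top_iff_linearIndependent.2 hf]
  exact (Submodule.span_eq (LinearMap.range (LinearMap.pi f))).symm

theorem exists_apply_eq_ite_of_linearIndependent [Finite ι] [DecidableEq ι]
    {f : ι → V →ₗ[K] K} (hf : LinearIndependent K (fun i ↦ ⇑(f i))) :
    ∃ P : ι → V, ∀ i j, f i (P j) = if i = j then 1 else 0 := by
  choose P hP using fun j ↦ LinearMap.pi_surjective_of_linearIndependent hf (Pi.single j 1)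
  refine ⟨P, fun i j ↦ ?_⟩
  rw [← LinearMap.pi_apply f, hP j, Pi.single_apply]

theorem exists_isotropic_of_apply_eq_ite [Fintype ι] [DecidableEq ι] [NeZero (2 : K)]
    {B : V →ₗ[K] V →ₗ[K] K} (hB : ∀ x y, B x y = B y x) {N P : ι → V}
    (hN : ∀ i j, B (N i) (N j) = 0) (hNP : ∀ i j, B (N i) (P j) = if i = j then 1 else 0) :
    ∃ M : ι → V, (∀ i j, B (N i) (M j) = if i = j then 1 else 0) ∧
      ∀ i j, B (M i) (M j) = 0 := by
  refine ⟨fun j ↦ P j - (2 : K)⁻¹ • ∑ l, B (P l) (P j) • N l,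
    fun i j ↦ ?_, fun i j ↦ ?_⟩
  · simp [hN, hNP]
  · simp only [Finset.smul_sum, map_sub, map_sum, map_smul, LinearMap.sub_apply,
      hB (P _) (N _), hNP, smul_eq_mul, mul_ite, mul_one, mul_zero, Finset.sum_ite_eq',
      Finset.mem_univ, ↓reduceIte, LinearMap.coe_sum, LinearMap.coe_smul, Finset.sum_apply,
      Pi.smul_apply, hN, Finset.sum_const_zero, sub_zero]
    rw [hB (P j) (P i)]
    field_simp
    ring

section Biorthogonal

variable [Fintype ι] [DecidableEq ι] {B : V →ₗ[K] V →ₗ[K] K} {N M : ι → V}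

theorem apply_sum_smul_of_apply_eq_ite (hNM : ∀ i j, B (N i) (M j) = if i = j then 1 else 0)
    (a : ι → K) (i : ι) : B (N i) (∑ j, a j • M j) = a i := by
  simp [hNM]

theorem linearIndependent_of_apply_eq_ite
    (hNM : ∀ i j, B (N i) (M j) = if i = j then 1 else 0) : LinearIndependent K M := by
  refine Fintype.linearIndependent_iff.2 fun a ha i ↦ ?_
  rw [← apply_sum_smul_of_apply_eq_ite hNM a i, ha, map_zero]

theorem inf_span_eq_bot_of_apply_eq_ite [NeZero (2 : K)] (hB : ∀ x y, B x y = B y x)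
    {W : Submodule K V} (hW : IsTotallyIsotropic B W) (hN : ∀ i, N i ∈ W)
    (hNM : ∀ i j, B (N i) (M j) = if i = j then 1 else 0) :
    W ⊓ Submodule.span K (Set.range M) = ⊥ := by
  refine (Submodule.eq_bot_iff _).2 fun x ⟨hxW, hxM⟩ ↦ ?_
  obtain ⟨a, rfl⟩ := (Submodule.mem_span_range_iff_exists_fun K).1 hxM
  have ha (i : ι) : a i = 0 := by
    rw [← apply_sum_smul_of_apply_eq_ite hNM a i]
    exact hW.apply_eq_zero hB (hN i) hxW
  simp [ha]

end Biorthogonal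

theorem isTotallyIsotropic_span {B : V →ₗ[K] V →ₗ[K] K} [Fintype ι] {M : ι → V}
    (hM : ∀ i j, B (M i) (M j) = 0) : IsTotallyIsotropic B (Submodule.span K (Set.range M)) := by
  intro x hx
  obtain ⟨a, rfl⟩ := (Submodule.mem_span_range_iff_exists_fun K).1 hx
  simp [hM]

end

theorem stmt_1_general {V : Type*} [AddCommGroup V] [Module ℝ V]
(g : V →ₗ[ℝ] V →ₗ[ℝ] ℝ) (hgsymm : ∀ x y : V, g x y = g y x)
    (hgnd : ∀ x : V, (∀ y : V, g x y = 0) → x = 0)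
    (W : Submodule ℝ V) (hWiso : ∀ x ∈ W, g x x = 0)
    {k : ℕ} (N : Fin k → V)
    (hNli : LinearIndependent ℝ N) (hNspan : Submodule.span ℝ (Set.range N) = W) :
    ∃ (U : Submodule ℝ V) (M : Fin k → V),
      (∀ x ∈ U, g x x = 0) ∧ W ⊓ U = ⊥ ∧ (∀ i, M i ∈ U) ∧
      LinearIndependent ℝ M ∧ Submodule.span ℝ (Set.range M) = U ∧
      (∀ i j : Fin k, g (N i) (M j) = if i = j then 1 else 0) := by
  classical
  have hNmem (i : Fin k) : N i ∈ W := hNspan ▸ Submodule.subset_span ⟨i, rfl⟩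
  obtain ⟨P, hNP⟩ := exists_apply_eq_ite_of_linearIndependent
    (linearIndependent_apply_of_nondegenerate hgnd hNli)
  obtain ⟨M, hNM, hMM⟩ := exists_isotropic_of_apply_eq_ite hgsymm
    (fun i j ↦ IsTotallyIsotropic.apply_eq_zero hgsymm hWiso (hNmem i) (hNmem j)) hNP
  exact ⟨_, M, isTotallyIsotropic_span hMM,
    inf_span_eq_bot_of_apply_eq_ite hgsymm hWiso hNmem hNM, fun j ↦ Submodule.subset_span ⟨j, rfl⟩,
    linearIndependent_of_apply_eq_ite hNM, rfl, hNM⟩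

/-- a totally isotropic subspace W with basis (N₁,...,N_k) admits a totally
isotropic supplement U, disjoint from W, with a basis (M₁,...,M_k) with g(Nᵢ, Mⱼ) = δᵢⱼ. -/
theorem stmt_1 {V : Type*} [AddCommGroup V] [Module ℝ V] [FiniteDimensional ℝ V]
(g : V →ₗ[ℝ] V →ₗ[ℝ] ℝ) (hgsymm : ∀ x y : V, g x y = g y x)
    (hgnd : ∀ x : V, (∀ y : V, g x y = 0) → x = 0)
    (W : Submodule ℝ V) (hWiso : ∀ x ∈ W, g x x = 0)
    {k : ℕ} (N : Fin k → V) (hNmem : ∀ i, N i ∈ W)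
    (hNli : LinearIndependent ℝ N) (hNspan : Submodule.span ℝ (Set.range N) = W) :
    ∃ (U : Submodule ℝ V) (M : Fin k → V),
      (∀ x ∈ U, g x x = 0) ∧ W ⊓ U = ⊥ ∧ (∀ i, M i ∈ U) ∧
      LinearIndependent ℝ M ∧ Submodule.span ℝ (Set.range M) = U ∧
      (∀ i j : Fin k, g (N i) (M j) = if i = j then 1 else 0) :=
  stmt_1_general g hgsymm hgnd W hWiso N hNli hNspan
end

section
/- If an algebraic curvature tensor R on a scalar product space (V, g) is Jacobi-orthogonal, then for ALL X, Y ∈ V (not only unit ones) with g(X, Y) = 0 one has g(J_X Y, J_Y X) = 0. -/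
/- Common definitions: scalar product space (V, g) with nondegenerate symmetric bilinear
form g, algebraic curvature tensors, Jacobi operators, and derived notions. -/

variable {V : Type*} [AddCommGroup V] [Module ℝ V]

/-
Since `J_{aX} = a² J_X`, the pairing `g(J_X Y, J_Y X)` scales by `(ab)³` under `(X, Y) ↦ (aX, bY)`,
so Jacobi-orthogonality extends from unit to non-null orthogonal pairs. Along a line `t ↦ tW + X`
in `Y^⊥` the pairing is a polynomial in `t`; if `g(X, W) ≠ 0`, it vanishes off the finitely many
roots of the nonzero quadratic `g(tW + X, tW + X)`, hence identically, in particular at `X`. Such a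
`W` exists unless `X` is a multiple of `Y`, where `J_Y Y = 0` does the job. Doing this first with
`Y` non-null and then with the roles of `X` and `Y` swapped removes both non-nullity assumptions.
-/

theorem Polynomial.eq_zero_of_eval_eq_zero_off_roots {R : Type*} [CommRing R] [IsDomain R]
    [Infinite R] {p q : Polynomial R} (hq : q ≠ 0) (h : ∀ t, q.eval t ≠ 0 → p.eval t = 0) :
    p = 0 := by
  have hpq : p * q = 0 := Polynomial.funext fun t => by
    by_cases ht : q.eval t = 0 <;> simp [ht, h]
  exact (mul_eq_zero.mp hpq).resolve_right hq

section BilinearForm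

variable {g : V →ₗ[ℝ] V →ₗ[ℝ] ℝ}

theorem eq_of_forall_apply_eq (hgnd : ∀ x : V, (∀ y : V, g x y = 0) → x = 0) {x x' : V}
    (h : ∀ z, g x z = g x' z) : x = x' :=
  sub_eq_zero.mp (hgnd _ fun z => by simp [h])

theorem exists_eq_smul_of_forall_apply_eq_zero (hgnd : ∀ x : V, (∀ y : V, g x y = 0) → x = 0)
    {X Y : V} (h : ∀ W, g Y W = 0 → g X W = 0) : ∃ c : ℝ, X = c • Y := by
  have hker : ⨅ _ : Unit, LinearMap.ker (g Y) ≤ LinearMap.ker (g X) := by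
    simpa [SetLike.le_def] using h
  have := mem_span_of_iInf_ker_le_ker hker
  rw [Set.range_const, Submodule.mem_span_singleton] at this
  obtain ⟨c, hc⟩ := this
  exact ⟨c, eq_of_forall_apply_eq hgnd fun Z => by simp [← hc]⟩

theorem exists_smul_apply_self_eq_one_or_neg_one {X : V} (hX : g X X ≠ 0) :
    ∃ a : ℝ, a ≠ 0 ∧ (g (a • X) (a • X) = 1 ∨ g (a • X) (a • X) = -1) := by
  have habs : 0 < |g X X| := abs_pos.mpr hX
  refine ⟨(√|g X X|)⁻¹, by positivity, ?_⟩
  have hnorm : g ((√|g X X|)⁻¹ • X) ((√|g X X|)⁻¹ • X) = g X X / |g X X| := by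
    simp only [map_smul, LinearMap.smul_apply, smul_eq_mul]
    field_simp
    rw [Real.sq_sqrt habs.le]
  rw [hnorm]
  rcases abs_choice (g X X) with h | h <;> rw [h]
  · exact .inl (div_self hX)
  · exact .inr (div_neg_self hX)

theorem eq_zero_of_orthogonal_of_forall_nonnull
    (hgsymm : ∀ x y : V, g x y = g y x) (hgnd : ∀ x : V, (∀ y : V, g x y = 0) → x = 0)
    {f : V → ℝ} {Y : V}
    (hpoly : ∀ X W : V, ∃ p : Polynomial ℝ, ∀ t : ℝ, f (t • W + X) = p.eval t)
    (hnonnull : ∀ X, g Y X = 0 → g X X ≠ 0 → f X = 0) (hspan : ∀ c : ℝ, f (c • Y) = 0)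
    {X : V} (hX : g Y X = 0) : f X = 0 := by
  by_cases hW : ∃ W, g Y W = 0 ∧ g X W ≠ 0
  · obtain ⟨W, hYW, hXW⟩ := hW
    obtain ⟨p, hp⟩ := hpoly X W
    let q : Polynomial ℝ := Polynomial.C (g W W) * Polynomial.X ^ 2 +
      Polynomial.C (2 * g X W) * Polynomial.X + Polynomial.C (g X X)
    have hq_eval : ∀ t, q.eval t = g (t • W + X) (t • W + X) := by
      intro t
      simp only [q, Polynomial.eval_add, Polynomial.eval_mul, Polynomial.eval_C,
        Polynomial.eval_pow, Polynomial.eval_X, map_add, map_smul, LinearMap.add_apply,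
        LinearMap.smul_apply, smul_eq_mul, hgsymm W X]
      ring
    have hq : q ≠ 0 := fun h => hXW (by simpa [q] using congrArg (Polynomial.coeff · 1) h)
    have hp0 : p = 0 := Polynomial.eq_zero_of_eval_eq_zero_off_roots hq fun t ht => by
      rw [← hp]
      exact hnonnull _ (by simp [hYW, hX]) (by rwa [← hq_eval])
    simpa [hp0] using hp 0
  · push Not at hW
    obtain ⟨c, rfl⟩ := exists_eq_smul_of_forall_apply_eq_zero hgnd hW
    exact hspan c

end BilinearForm

namespace IsCurv

variable {R : V → V → V → V → ℝ}

theorem apply_smul_add₂ (hR : IsCurv R) (a : ℝ) (X Y Y' Z W : V) :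
    R X (a • Y + Y') Z W = a * R X Y Z W + R X Y' Z W :=
  hR.2.1 a X Y Y' Z W

theorem apply_smul_add₃ (hR : IsCurv R) (a : ℝ) (X Y Z Z' W : V) :
    R X Y (a • Z + Z') W = a * R X Y Z W + R X Y Z' W :=
  hR.2.2.1 a X Y Z Z' W

theorem apply_smul_add₄ (hR : IsCurv R) (a : ℝ) (X Y Z W W' : V) :
    R X Y Z (a • W + W') = a * R X Y Z W + R X Y Z W' :=
  hR.2.2.2.1 a X Y Z W W'

theorem apply_smul₂ (hR : IsCurv R) (a : ℝ) (X Y Z W : V) :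
    R X (a • Y) Z W = a * R X Y Z W := by
  have h0 : R X 0 Z W = 0 := by simpa using hR.apply_smul_add₂ (-1) X Y Y Z W
  simpa [h0] using hR.apply_smul_add₂ a X Y 0 Z W

theorem apply_smul₃ (hR : IsCurv R) (a : ℝ) (X Y Z W : V) :
    R X Y (a • Z) W = a * R X Y Z W := by
  have h0 : R X Y 0 W = 0 := by simpa using hR.apply_smul_add₃ (-1) X Y Z Z W
  simpa [h0] using hR.apply_smul_add₃ a X Y Z 0 W

theorem apply_self_left (hR : IsCurv R) (X Z W : V) : R X X Z W = 0 := by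
  linarith [hR.2.2.2.2.1 X X Z W]

end IsCurv

namespace IsJacobi

variable {g : V →ₗ[ℝ] V →ₗ[ℝ] ℝ} {R : V → V → V → V → ℝ} {J : V → V →ₗ[ℝ] V}

theorem apply_smul_left (hgnd : ∀ x : V, (∀ y : V, g x y = 0) → x = 0) (hR : IsCurv R)
    (hJ : IsJacobi g R J) (a : ℝ) (X Y : V) : J (a • X) Y = a ^ 2 • J X Y :=
  eq_of_forall_apply_eq hgnd fun Z => by
    rw [hJ, map_smul, LinearMap.smul_apply, hJ, hR.apply_smul₂, hR.apply_smul₃, smul_eq_mul]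
    ring

theorem pairing_smul_self (hR : IsCurv R) (hJ : IsJacobi g R J) (c : ℝ) (X : V) :
    g (J (c • X) X) (J X (c • X)) = 0 := by
  rw [hJ, hR.apply_smul₂, hR.apply_smul₃, hR.apply_self_left]
  ring

theorem pairing_smul_smul (hgnd : ∀ x : V, (∀ y : V, g x y = 0) → x = 0) (hR : IsCurv R)
    (hJ : IsJacobi g R J) (a b : ℝ) (X Y : V) :
    g (J (a • X) (b • Y)) (J (b • Y) (a • X)) = (a * b) ^ 3 * g (J X Y) (J Y X) := by
  simp only [hJ.apply_smul_left hgnd hR, map_smul, LinearMap.smul_apply, smul_eq_mul]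
  ring

theorem exists_polynomial_pairing_line (hR : IsCurv R) (hJ : IsJacobi g R J) (X W Y : V) :
    ∃ p : Polynomial ℝ, ∀ t : ℝ, g (J (t • W + X) Y) (J Y (t • W + X)) = p.eval t := by
  set A := J Y X
  set B := J Y W
  refine ⟨Polynomial.C (R Y W W B) * Polynomial.X ^ 3 +
    Polynomial.C (R Y W W A + R Y W X B + R Y X W B) * Polynomial.X ^ 2 +
    Polynomial.C (R Y W X A + R Y X W A + R Y X X B) * Polynomial.X +
    Polynomial.C (R Y X X A), fun t => ?_⟩
  rw [hJ, map_add, map_smul]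
  simp only [hR.apply_smul_add₂, hR.apply_smul_add₃, hR.apply_smul_add₄, Polynomial.eval_add,
    Polynomial.eval_mul, Polynomial.eval_C, Polynomial.eval_pow, Polynomial.eval_X]
  ring

theorem pairing_eq_zero_of_nonnull (hgnd : ∀ x : V, (∀ y : V, g x y = 0) → x = 0)
    (hR : IsCurv R) (hJ : IsJacobi g R J) (horth : JacobiOrthogonal g J) {X Y : V}
    (hX : g X X ≠ 0) (hY : g Y Y ≠ 0) (hXY : g X Y = 0) : g (J X Y) (J Y X) = 0 := by
  obtain ⟨a, ha, haX⟩ := exists_smul_apply_self_eq_one_or_neg_one hX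
  obtain ⟨b, hb, hbY⟩ := exists_smul_apply_self_eq_one_or_neg_one hY
  have h := horth _ _ haX hbY (by simp [hXY])
  rw [hJ.pairing_smul_smul hgnd hR] at h
  simpa [ha, hb] using h

theorem pairing_eq_zero_of_nonnull_right (hgsymm : ∀ x y : V, g x y = g y x)
    (hgnd : ∀ x : V, (∀ y : V, g x y = 0) → x = 0) (hR : IsCurv R) (hJ : IsJacobi g R J)
    (horth : JacobiOrthogonal g J) {X Y : V} (hY : g Y Y ≠ 0) (hYX : g Y X = 0) :
    g (J X Y) (J Y X) = 0 :=
  eq_zero_of_orthogonal_of_forall_nonnull hgsymm hgnd (f := fun X => g (J X Y) (J Y X))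
    (fun X W => hJ.exists_polynomial_pairing_line hR X W Y)
    (fun X hYX hX => hJ.pairing_eq_zero_of_nonnull hgnd hR horth hX hY (by rw [hgsymm, hYX]))
    (fun c => hJ.pairing_smul_self hR c Y) hYX

end IsJacobi

theorem stmt_2_general {V : Type*} [AddCommGroup V] [Module ℝ V]
(g : V →ₗ[ℝ] V →ₗ[ℝ] ℝ) (hgsymm : ∀ x y : V, g x y = g y x)
    (hgnd : ∀ x : V, (∀ y : V, g x y = 0) → x = 0)
    (R : V → V → V → V → ℝ) (hR : IsCurv R)
    (J : V → V →ₗ[ℝ] V) (hJ : IsJacobi g R J)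
    (horth : JacobiOrthogonal g J) :
    ∀ X Y : V, g X Y = 0 → g (J X Y) (J Y X) = 0 := by
  intro X Y hXY
  refine eq_zero_of_orthogonal_of_forall_nonnull hgsymm hgnd (f := fun Y => g (J X Y) (J Y X))
    (fun Y W => ?_) (fun Y hXY hY => ?_) (fun c => ?_) hXY
  · obtain ⟨p, hp⟩ := hJ.exists_polynomial_pairing_line hR Y W X
    exact ⟨p, fun t => by rw [hgsymm, hp]⟩
  · exact hJ.pairing_eq_zero_of_nonnull_right hgsymm hgnd hR horth hY (by rw [hgsymm, hXY])
  · rw [hgsymm]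
    exact hJ.pairing_smul_self hR c X

/-- if R is Jacobi-orthogonal then g(J_X Y, J_Y X) = 0 for ALL orthogonal
X, Y ∈ V. -/
theorem stmt_2 {V : Type*} [AddCommGroup V] [Module ℝ V] [FiniteDimensional ℝ V]
(g : V →ₗ[ℝ] V →ₗ[ℝ] ℝ) (hgsymm : ∀ x y : V, g x y = g y x)
    (hgnd : ∀ x : V, (∀ y : V, g x y = 0) → x = 0)
    (R : V → V → V → V → ℝ) (hR : IsCurv R)
    (J : V → V →ₗ[ℝ] V) (hJ : IsJacobi g R J)
    (horth : JacobiOrthogonal g J) :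
    ∀ X Y : V, g X Y = 0 → g (J X Y) (J Y X) = 0 :=
  stmt_2_general g hgsymm hgnd R hR J hJ horth
end

section
/- If an algebraic curvature tensor R on a scalar product space (V, g) is Jacobi-orthogonal, then for every μ ∈ ℝ the algebraic curvature tensor R + μR¹ is Jacobi-orthogonal. -/
/- Common definitions: scalar product space (V, g) with nondegenerate symmetric bilinear
form g, algebraic curvature tensors, Jacobi operators, and derived notions. -/

variable {V : Type*} [AddCommGroup V] [Module ℝ V]

/-- The algebraic curvature tensor `R¹` of constant sectional curvature one. -/
def R1 (g : V →ₗ[ℝ] V →ₗ[ℝ] ℝ) : V → V → V → V → ℝ :=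
  fun X Y Z W => g Y Z * g X W - g X Z * g Y W

/-! For orthogonal `X`, `Y` the Jacobi operator of `R + μR¹` is `J_X Y + μ g(X,X) Y`. Expanding
`g(J'_X Y, J'_Y X)`, every cross term vanishes because `g(J_X Y, X) = R(Y,X,X,X) = 0` and
`g(X, Y) = 0`, leaving `g(J_X Y, J_Y X) = 0`. -/

theorem IsCurv.apply_self_self {R : V → V → V → V → ℝ} (hR : IsCurv R) (X Y Z : V) :
    R X Y Z Z = 0 := by
  linarith [hR.2.2.2.2.2.1 X Y Z Z]

theorem IsJacobi.apply_left_self {g : V →ₗ[ℝ] V →ₗ[ℝ] ℝ} {R : V → V → V → V → ℝ}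
    {J : V → V →ₗ[ℝ] V} (hJ : IsJacobi g R J) (hR : IsCurv R) (X Y : V) :
    g (J X Y) X = 0 := by
  rw [hJ, hR.apply_self_self]

theorem IsJacobi.apply_add_smul_R1 {g : V →ₗ[ℝ] V →ₗ[ℝ] ℝ}
    (hgnd : ∀ x : V, (∀ y : V, g x y = 0) → x = 0) {R : V → V → V → V → ℝ} {μ : ℝ}
    {J J' : V → V →ₗ[ℝ] V} (hJ : IsJacobi g R J)
    (hJ' : IsJacobi g (fun X Y Z W => R X Y Z W + μ * R1 g X Y Z W) J') (X Y : V) :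
    J' X Y = J X Y + μ • (g X X • Y - g Y X • X) := by
  refine sub_eq_zero.mp (hgnd _ fun Z => ?_)
  simp only [map_sub, map_add, map_smul, LinearMap.sub_apply, LinearMap.add_apply,
    LinearMap.smul_apply, smul_eq_mul, hJ' X Y Z, hJ X Y Z, R1]
  ring

theorem stmt_3_general {V : Type*} [AddCommGroup V] [Module ℝ V]
(g : V →ₗ[ℝ] V →ₗ[ℝ] ℝ) (hgsymm : ∀ x y : V, g x y = g y x)
    (hgnd : ∀ x : V, (∀ y : V, g x y = 0) → x = 0)
    (R : V → V → V → V → ℝ) (hR : IsCurv R)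
    (J : V → V →ₗ[ℝ] V) (hJ : IsJacobi g R J)
    (horth : JacobiOrthogonal g J) (μ : ℝ)
    (J' : V → V →ₗ[ℝ] V)
    (hJ' : IsJacobi g (fun X Y Z W => R X Y Z W + μ * R1 g X Y Z W) J') :
    JacobiOrthogonal g J' := by
  intro X Y hX hY hXY
  have hYX : g Y X = 0 := by rw [hgsymm, hXY]
  rw [hJ.apply_add_smul_R1 hgnd hJ', hJ.apply_add_smul_R1 hgnd hJ', hXY, hYX]
  simp only [map_add, map_sub, map_smul, LinearMap.add_apply, LinearMap.sub_apply,
    LinearMap.smul_apply, smul_eq_mul]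
  rw [horth X Y hX hY hXY, hJ.apply_left_self hR, hgsymm Y, hJ.apply_left_self hR, hYX]
  ring

/-- if R is Jacobi-orthogonal then so is R + μR¹ for every μ ∈ ℝ. -/
theorem stmt_3 {V : Type*} [AddCommGroup V] [Module ℝ V] [FiniteDimensional ℝ V]
(g : V →ₗ[ℝ] V →ₗ[ℝ] ℝ) (hgsymm : ∀ x y : V, g x y = g y x)
    (hgnd : ∀ x : V, (∀ y : V, g x y = 0) → x = 0)
    (R : V → V → V → V → ℝ) (hR : IsCurv R)
    (J : V → V →ₗ[ℝ] V) (hJ : IsJacobi g R J)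
    (horth : JacobiOrthogonal g J) (μ : ℝ)
    (J' : V → V →ₗ[ℝ] V)
    (hJ' : IsJacobi g (fun X Y Z W => R X Y Z W + μ * R1 g X Y Z W) J') :
    JacobiOrthogonal g J' :=
  stmt_3_general g hgsymm hgnd R hR J hJ horth μ J' hJ'
end

section
/- Every quasi-Clifford algebraic curvature tensor on a scalar product space (V, g) is Jacobi-orthogonal. -/
/- Common definitions: scalar product space (V, g) with nondegenerate symmetric bilinear
form g, algebraic curvature tensors, Jacobi operators, and derived notions. -/

variable {V : Type*} [AddCommGroup V] [Module ℝ V]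

/-- The algebraic curvature tensor `R^J` associated with a skew-adjoint endomorphism `J`. -/
def RJ (g : V →ₗ[ℝ] V →ₗ[ℝ] ℝ) (J : V →ₗ[ℝ] V) : V → V → V → V → ℝ :=
  fun X Y Z W => g (J X) Z * g (J Y) W - g (J Y) Z * g (J X) W + 2 * g (J X) Y * g (J Z) W

/-- A quasi-Clifford family: skew-adjoint endomorphisms satisfying the Hurwitz-like
relations `JᵢJⱼ + JⱼJᵢ = 2δᵢⱼcᵢ·id`. -/
def IsQuasiCliffordFamily (g : V →ₗ[ℝ] V →ₗ[ℝ] ℝ) {m : ℕ}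
    (F : Fin m → V →ₗ[ℝ] V) (c : Fin m → ℝ) : Prop :=
  (∀ (i : Fin m) (X Y : V), g (F i X) Y = - g X (F i Y)) ∧
  (∀ i j : Fin m, F i ∘ₗ F j + F j ∘ₗ F i = (2 * (if i = j then c i else 0)) • LinearMap.id)

/-!
Fix orthogonal `X`, `Y`. Since each `Fᵢ` is skew-adjoint, `g (Fᵢ Y) Y = 0`, and the quasi-Clifford
tensor reduces to `R X Y Y W = μ₀ ε_Y g X W + 3 ∑ᵢ μᵢ g (Fᵢ X) Y g (Fᵢ Y) W`. Pairing the two Jacobi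
vectors with this formula twice gives `g (J_X Y) (J_Y X) = -9 ∑ᵢⱼ bᵢ bⱼ g (Fⱼ Y) (Fᵢ X)` with
`bᵢ = μᵢ g (Fᵢ X) Y`, and the Hurwitz relations make `g (Fⱼ Y) (Fᵢ X)` antisymmetric in `i, j`
when `X ⊥ Y`, so the quadratic sum vanishes.
-/

theorem Finset.sum_mul_sum_mul_eq_zero_of_antisymm {ι 𝕜 : Type*} [Fintype ι] [CommRing 𝕜]
    [IsAddTorsionFree 𝕜] (a : ι → 𝕜) (d : ι → ι → 𝕜) (hd : ∀ i j, d j i + d i j = 0) :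
    ∑ i, a i * ∑ j, a j * d j i = 0 := by
  simp only [Finset.mul_sum]
  rw [← self_eq_neg, ← Finset.sum_neg_distrib, Finset.sum_comm]
  refine Finset.sum_congr rfl fun i _ => ?_
  rw [← Finset.sum_neg_distrib]
  refine Finset.sum_congr rfl fun j _ => ?_
  linear_combination a i * a j * hd i j

section

variable (g : V →ₗ[ℝ] V →ₗ[ℝ] ℝ)

theorem apply_self_eq_zero_of_skew (hg : ∀ x y : V, g x y = g y x) {T : V →ₗ[ℝ] V}
    (hT : ∀ X Y : V, g (T X) Y = - g X (T Y)) (Z : V) : g (T Z) Z = 0 := by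
  linarith [hT Z Z, hg Z (T Z)]

theorem IsQuasiCliffordFamily.apply_apply_add_apply_apply {m : ℕ} {F : Fin m → V →ₗ[ℝ] V}
    {c : Fin m → ℝ} (hF : IsQuasiCliffordFamily g F c) (i j : Fin m) (X Y : V) :
    g (F j Y) (F i X) + g (F i Y) (F j X) = -((2 * if i = j then c i else 0) * g Y X) := by
  have hHurwitz := congrArg (fun T : V →ₗ[ℝ] V => g Y (T X)) (hF.2 i j)
  simp only [LinearMap.add_apply, LinearMap.comp_apply, LinearMap.smul_apply,
    LinearMap.id_apply, map_add, map_smul, smul_eq_mul] at hHurwitz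
  rw [hF.1 j Y, hF.1 i Y]
  linear_combination -hHurwitz

theorem R1_apply_self_self_of_orthogonal {X Y : V} (hXY : g X Y = 0) (W : V) :
    R1 g X Y Y W = g Y Y * g X W := by
  simp [R1, hXY]

theorem RJ_apply_self_self {T : V →ₗ[ℝ] V} {X Y : V} (hTY : g (T Y) Y = 0) (W : V) :
    RJ g T X Y Y W = 3 * g (T X) Y * g (T Y) W := by
  simp only [RJ, hTY]
  ring

def quasiCliffordTensor (μ₀ : ℝ) {m : ℕ} (μ : Fin m → ℝ) (F : Fin m → V →ₗ[ℝ] V) :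
    V → V → V → V → ℝ :=
  fun X Y Z W => μ₀ * R1 g X Y Z W + ∑ i : Fin m, μ i * RJ g (F i) X Y Z W

theorem quasiCliffordTensor_apply_self_self_of_orthogonal (hg : ∀ x y : V, g x y = g y x)
    (μ₀ : ℝ) {m : ℕ} (μ : Fin m → ℝ) {F : Fin m → V →ₗ[ℝ] V}
    (hF : ∀ (i : Fin m) (X Y : V), g (F i X) Y = - g X (F i Y)) {X Y : V} (hXY : g X Y = 0)
    (W : V) :
    quasiCliffordTensor g μ₀ μ F X Y Y W
      = μ₀ * g Y Y * g X W + 3 * ∑ i, μ i * g (F i X) Y * g (F i Y) W := by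
  simp only [quasiCliffordTensor, R1_apply_self_self_of_orthogonal g hXY,
    RJ_apply_self_self g (apply_self_eq_zero_of_skew g hg (hF _) Y), Finset.mul_sum]
  exact congrArg₂ _ (by ring) (Finset.sum_congr rfl fun i _ => by ring)

end

theorem stmt_4_general {V : Type*} [AddCommGroup V] [Module ℝ V]
(g : V →ₗ[ℝ] V →ₗ[ℝ] ℝ) (hgsymm : ∀ x y : V, g x y = g y x)
    {m : ℕ} (F : Fin m → V →ₗ[ℝ] V) (c : Fin m → ℝ)
    (hF : IsQuasiCliffordFamily g F c)
    (μ₀ : ℝ) (μ : Fin m → ℝ) (R : V → V → V → V → ℝ)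
    (hR : ∀ X Y Z W : V,
      R X Y Z W = μ₀ * R1 g X Y Z W + ∑ i : Fin m, μ i * RJ g (F i) X Y Z W)
    (J : V → V →ₗ[ℝ] V) (hJ : IsJacobi g R J) :
    JacobiOrthogonal g J := by
  obtain rfl : R = quasiCliffordTensor g μ₀ μ F := by funext X Y Z W; exact hR X Y Z W
  intro X Y _ _ hXY
  have hYX : g Y X = 0 := (hgsymm Y X).trans hXY
  have hR_XY := quasiCliffordTensor_apply_self_self_of_orthogonal g hgsymm μ₀ μ hF.1 hXY
  have hR_YX := quasiCliffordTensor_apply_self_self_of_orthogonal g hgsymm μ₀ μ hF.1 hYX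
  have hJ_YX (W : V) : g W (J Y X) = quasiCliffordTensor g μ₀ μ F X Y Y W :=
    (hgsymm W _).trans (hJ Y X W)
  set b : Fin m → ℝ := fun i => μ i * g (F i X) Y
  have hFX_J (i : Fin m) : g (F i X) (J Y X) = 3 * ∑ j, b j * g (F j Y) (F i X) := by
    rw [hJ_YX, hR_XY, hgsymm X, apply_self_eq_zero_of_skew g hgsymm (hF.1 i), mul_zero, zero_add]
  have hY_J : g Y (J Y X) = 0 := by
    simp [hJ_YX, hR_XY, hXY, apply_self_eq_zero_of_skew g hgsymm (hF.1 _)]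
  have hswap (i : Fin m) : μ i * g (F i Y) X = -b i := by
    rw [hF.1 i Y, hgsymm Y]; ring
  have hquadratic := Finset.sum_mul_sum_mul_eq_zero_of_antisymm b (fun j i => g (F j Y) (F i X))
    fun i j => by simpa [hYX] using hF.apply_apply_add_apply_apply g i j X Y
  rw [hJ X Y, hR_YX, hY_J]
  simp only [hswap, hFX_J, mul_zero, zero_add]
  rw [← mul_eq_zero_of_right (-9 : ℝ) hquadratic, Finset.mul_sum, Finset.mul_sum]
  exact Finset.sum_congr rfl fun i _ => by ring

/-- every quasi-Clifford algebraic curvature tensor is Jacobi-orthogonal. -/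
theorem stmt_4 {V : Type*} [AddCommGroup V] [Module ℝ V] [FiniteDimensional ℝ V]
(g : V →ₗ[ℝ] V →ₗ[ℝ] ℝ) (hgsymm : ∀ x y : V, g x y = g y x)
    (hgnd : ∀ x : V, (∀ y : V, g x y = 0) → x = 0)
    {m : ℕ} (F : Fin m → V →ₗ[ℝ] V) (c : Fin m → ℝ)
    (hF : IsQuasiCliffordFamily g F c)
    (μ₀ : ℝ) (μ : Fin m → ℝ) (R : V → V → V → V → ℝ)
    (hR : ∀ X Y Z W : V,
      R X Y Z W = μ₀ * R1 g X Y Z W + ∑ i : Fin m, μ i * RJ g (F i) X Y Z W)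
    (J : V → V →ₗ[ℝ] V) (hJ : IsJacobi g R J) :
    JacobiOrthogonal g J :=
  stmt_4_general g hgsymm F c hF μ₀ μ R hR J hJ
end
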